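/- Let hₙ (n ≥ 3) be the affine orthogonal Lie algebra with basis {α_{ij}}_{i<j} ∪ {∂/∂xⁱ}. Define I : hₙ → hₙ by I(∂/∂xⁱ) = ∂/∂xⁱ and I(α_{ij}) = 0. Then I is a Chevalley-Eilenberg 1-cocycle with adjoint coefficients, i.e., [g, I(h)] - [h, I(g)] - I([g,h]) = 0 for all g, h ∈ hₙ, and I is not a coboundary (I ≠ ad_x for any x ∈ hₙ). -/
import Mathlib


/-!  STATEMENT 12: The "metric" cochain `I : hₙ → hₙ`, `I(∂/∂xⁱ) = ∂/∂xⁱ`, `I(α_{ij}) = 0`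
(realized on vector fields by taking the constant field of translation components at the
origin), is a Chevalley-Eilenberg 1-cocycle of `hₙ` with adjoint coefficients and is not a
coboundary: `I ≠ ad_x` for every `x ∈ hₙ`. -/

/-- Vector fields on ℝⁿ, modelled as maps assigning to each point the components of the
field at that point. -/
abbrev Vec (n : ℕ) := (Fin n → ℝ) → (Fin n → ℝ)

/-- The Lie bracket of vector fields: `[X,Y] = X(Y) - Y(X)` (directional derivatives of
the coefficient functions). -/
noncomputable def br {n : ℕ} (X Y : Vec n) : Vec n :=
  fun p => fderiv ℝ Y p (X p) - fderiv ℝ X p (Y p)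

/-- The rotational vector field `α_{ij} = xᵢ ∂/∂xⱼ - xⱼ ∂/∂xⁱ`. -/
noncomputable def alphaVF {n : ℕ} (i j : Fin n) : Vec n :=
  fun p => p i • (Pi.single j (1 : ℝ) : Fin n → ℝ) - p j • (Pi.single i (1 : ℝ) : Fin n → ℝ)

/-- The translation vector field `∂/∂xⁱ`. -/
def delVF {n : ℕ} (i : Fin n) : Vec n := fun _ => (Pi.single i (1 : ℝ) : Fin n → ℝ)

/-- `hₙ`, the span of the `α_{ij}` (`i < j`) and the `∂/∂xⁱ`:
the affine orthogonal Lie algebra realized by vector fields on ℝⁿ. -/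
noncomputable def hAff (n : ℕ) : Submodule ℝ (Vec n) :=
  Submodule.span ℝ
    ({X | ∃ i j : Fin n, i < j ∧ X = alphaVF i j} ∪ {X | ∃ i : Fin n, X = delVF i})

/-- `Jₙ`, the span of the translations `∂/∂xⁱ`. -/
noncomputable def JAff (n : ℕ) : Submodule ℝ (Vec n) :=
  Submodule.span ℝ {X | ∃ i : Fin n, X = delVF i}

/-- The copy of `so(n)` inside `hₙ`: the span of the `α_{ij}`, `i < j`. -/
noncomputable def soAff (n : ℕ) : Submodule ℝ (Vec n) :=
  Submodule.span ℝ {X | ∃ i j : Fin n, i < j ∧ X = alphaVF i j}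

/-- The cochain `I` : on the affine field `X ∈ hₙ` it returns the constant field with the
value of `X` at the origin, so `I(∂/∂xⁱ) = ∂/∂xⁱ` and `I(α_{ij}) = 0`. -/
def Iop {n : ℕ} (X : Vec n) : Vec n := fun _ => X 0


lemma mem_affine {n : ℕ} {X : Vec n} (hX : X ∈ hAff n) :
    ∃ (A : (Fin n → ℝ) →L[ℝ] (Fin n → ℝ)) (c : Fin n → ℝ),
      (∀ p, X p = A p + c) ∧
      (∀ i j : Fin n, A (Pi.single i 1) j = - A (Pi.single j 1) i) := by
  refine Submodule.span_induction ?_ ?_ ?_ ?_ hX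
  · rintro X (⟨i, j, hij, rfl⟩ | ⟨i, rfl⟩)
    · refine ⟨(ContinuousLinearMap.proj i).smulRight (Pi.single j (1:ℝ))
        - (ContinuousLinearMap.proj j).smulRight (Pi.single i (1:ℝ)), 0, ?_, ?_⟩
      · intro p; simp [alphaVF]
      · intro k l
        simp [Pi.single_apply]
        split_ifs <;> subst_vars <;> simp_all
    · exact ⟨0, Pi.single i 1, fun p => by simp [delVF], fun k l => by simp⟩
  · exact ⟨0, 0, fun p => by simp, fun k l => by simp⟩
  · rintro X Y _ _ ⟨A, a, hA, sA⟩ ⟨B, b, hB, sB⟩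
    refine ⟨A + B, a + b, fun p => ?_, fun k l => ?_⟩
    · simp [Pi.add_apply, hA p, hB p]; abel
    · simp [sA k l, sB k l]; ring
  · rintro r X _ ⟨A, a, hA, sA⟩
    refine ⟨r • A, r • a, fun p => ?_, fun k l => ?_⟩
    · simp [hA p, smul_add]
    · simp [sA k l]

lemma fderiv_affine {n : ℕ} (A : (Fin n → ℝ) →L[ℝ] (Fin n → ℝ)) (c : Fin n → ℝ) (p : Fin n → ℝ) :
    fderiv ℝ (fun q => A q + c) p = A :=
  (A.hasFDerivAt.add_const c).fderiv

lemma br_eq {n : ℕ} (A B : (Fin n → ℝ) →L[ℝ] (Fin n → ℝ)) (a b : Fin n → ℝ) :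
    br (fun q => A q + a) (fun q => B q + b) = fun p => B (A p + a) - A (B p + b) := by
  funext p
  simp only [br, fderiv_affine]

theorem metric_class_is_cocycle_not_coboundary (n : ℕ) (hn : 3 ≤ n) :
    (∀ g ∈ hAff n, ∀ h ∈ hAff n,
        br g (Iop h) - br h (Iop g) - Iop (br g h) = 0) ∧
    ¬ ∃ x ∈ hAff n, ∀ g ∈ hAff n, Iop g = br x g := by
  constructor
  · intro g hg h hh
    obtain ⟨A, a, hA, -⟩ := mem_affine hg
    obtain ⟨B, b, hB, -⟩ := mem_affine hh
    have hgf : g = fun q => A q + a := funext hA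
    have hhf : h = fun q => B q + b := funext hB
    subst hgf; subst hhf
    have e2 : Iop (fun q => B q + b) = fun q => (0 : (Fin n → ℝ) →L[ℝ] (Fin n → ℝ)) q + (B 0 + b) := by
      funext q; simp [Iop]
    have e3 : Iop (fun q => A q + a) = fun q => (0 : (Fin n → ℝ) →L[ℝ] (Fin n → ℝ)) q + (A 0 + a) := by
      funext q; simp [Iop]
    rw [e2, e3, br_eq, br_eq, br_eq]
    funext p
    simp only [Pi.sub_apply, Pi.zero_apply, Iop, ContinuousLinearMap.zero_apply, map_zero,
      map_add, zero_sub, sub_zero, zero_add]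
    simp
    abel
  · rintro ⟨x, hx, H⟩
    obtain ⟨A, c, hA, sA⟩ := mem_affine hx
    have hxf : x = fun q => A q + c := funext hA
    subst hxf
    set i : Fin n := ⟨0, by omega⟩ with hidef
    have hmem : delVF i ∈ hAff n := Submodule.subset_span (Or.inr ⟨i, rfl⟩)
    have hd : ∀ p : Fin n → ℝ, fderiv ℝ (delVF (n := n) i) p = 0 := fun p =>
      fderiv_const_apply _
    have key := congrFun (congrFun (H (delVF i) hmem) 0) i
    simp only [Iop, br, delVF, fderiv_affine] at key
    rw [hd 0] at key
    have hskew : A (Pi.single i 1) i = 0 := by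
      have := sA i i; linarith
    simp [hskew] at key
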